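/- arXiv:2509.24084 — 2 statements merged into one kernel-verified Lean document; each statement's English description precedes it below -/
import Mathlib

section
/- Let V(x,y) := (0, (1 − cos x) sin y), X_1(x,y) := (1, 0), X_2(x,y) := (0, η(y)) on ℝ², where η is C^∞, 2π-periodic, and η(y) > 0 for y ∈ [0, π/4) ∪ (3π/4, 5π/4) ∪ (7π/4, 2π]. Then for every point p = (x,y) ∈ ℝ², the five vectors V(p), X_1(p), X_2(p), [X_1,V](p), and [X_1,[X_1,V]](p) span ℝ². In particular, the family {V, X_1, X_2} satisfies the Hörmander condition at every point of ℝ² (equivalently, on the whole 2-torus). -/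
open Real Set Filter Topology

noncomputable section

/-- Euclidean space `ℝ^d`. -/
abbrev Ed (d : ℕ) : Type := EuclideanSpace ℝ (Fin d)

/-- The vector `2πk ∈ 2πℤ^d`. -/
def twoPiVec (d : ℕ) (k : Fin d → ℤ) : Ed d := WithLp.toLp 2 (fun i => 2 * π * (k i))

/-- A map `ℝ^d → ℝ^d` is `2π`-periodic if it is invariant under translations by `2πℤ^d`. -/
def IsPeriodicVF {d : ℕ} (V : Ed d → Ed d) : Prop :=
  ∀ (x : Ed d) (k : Fin d → ℤ), V (x + twoPiVec d k) = V x

/-- The torus distance `dist_T(p,q) = inf { ‖p - q - 2πk‖ : k ∈ ℤ^d }`. -/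
def distT {d : ℕ} (p q : Ed d) : ℝ := ⨅ k : Fin d → ℤ, ‖p - q - twoPiVec d k‖

/-- `φ` is the (complete) flow of the vector field `V`. -/
def IsFlowOf {d : ℕ} (V : Ed d → Ed d) (φ : ℝ → Ed d → Ed d) : Prop :=
  (∀ x, φ 0 x = x) ∧ ∀ (t : ℝ) (x : Ed d), HasDerivAt (fun s => φ s x) (V (φ t x)) t

/-- A `δ`-solution of `ẋ = V(x)` on `[a,b]`: a continuous, piecewise `C¹` curve
(differentiable off a finite set) with `‖ẋ(t) - V(x(t))‖ ≤ δ` wherever differentiable. -/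
def IsDeltaSol {d : ℕ} (V : Ed d → Ed d) (δ a b : ℝ) (x : ℝ → Ed d) : Prop :=
  ContinuousOn x (Icc a b) ∧
  ∃ F : Finset ℝ, ∀ t ∈ Icc a b, t ∉ F →
    ∃ v : Ed d, HasDerivAt x v t ∧ ‖v - V (x t)‖ ≤ δ

/-- `p` is nonwandering for the flow `φ` on the torus. -/
def NonwanderingPt {d : ℕ} (φ : ℝ → Ed d → Ed d) (p : Ed d) : Prop :=
  ∀ ε > 0, ∃ T, 1 ≤ T ∧ ∃ p' : Ed d, distT p' p < ε ∧ distT (φ T p') p < ε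

/-- `p` is chain recurrent for `ẋ = V(x)` on the torus. -/
def ChainRecurrentPt {d : ℕ} (V : Ed d → Ed d) (p : Ed d) : Prop :=
  ∀ δ > 0, ∃ T, 1 ≤ T ∧ ∃ x : ℝ → Ed d,
    IsDeltaSol V δ 0 T x ∧ x 0 = p ∧ ∃ k, x T - p = twoPiVec d k

/-- A set is invariant if it is invariant under the flow and under translations by `2πℤ^d`. -/
def TorusInvariant {d : ℕ} (φ : ℝ → Ed d → Ed d) (S : Set (Ed d)) : Prop :=
  (∀ x ∈ S, ∀ t, φ t x ∈ S) ∧ ∀ x ∈ S, ∀ k, x + twoPiVec d k ∈ S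

/-- The orbit of `p` together with all its `2πℤ^d`-translates. -/
def torusOrbit {d : ℕ} (φ : ℝ → Ed d → Ed d) (p : Ed d) : Set (Ed d) :=
  {y | ∃ t k, y = φ t p + twoPiVec d k}

/-- `p` is minimal: the closure of its (torus) orbit contains no nonempty proper closed
invariant subset. -/
def IsMinimalPt {d : ℕ} (φ : ℝ → Ed d → Ed d) (p : Ed d) : Prop :=
  ∀ S ⊆ closure (torusOrbit φ p), IsClosed S → TorusInvariant φ S →
    S.Nonempty → S = closure (torusOrbit φ p)

/-- `Min_V`: the closure of the set of all minimal points. -/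
def MinV {d : ℕ} (φ : ℝ → Ed d → Ed d) : Set (Ed d) := closure {p | IsMinimalPt φ p}

/-- The Lie bracket `[X,Y](p) = DY(p) X(p) - DX(p) Y(p)` of vector fields on `ℝ^d`. -/
def vfBracket {d : ℕ} (X Y : Ed d → Ed d) : Ed d → Ed d :=
  fun p => fderiv ℝ Y p (X p) - fderiv ℝ X p (Y p)

/-- `ℬ(𝒜)`: the smallest family of vector fields containing `𝒜` and closed under brackets. -/
inductive LieGen {d : ℕ} (A : Set (Ed d → Ed d)) : (Ed d → Ed d) → Prop
  | base : ∀ X ∈ A, LieGen A X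
  | bracket : ∀ X Y, LieGen A X → LieGen A Y → LieGen A (vfBracket X Y)

/-- The family `A` satisfies the Hörmander condition at `p`. -/
def Hormander {d : ℕ} (A : Set (Ed d → Ed d)) (p : Ed d) : Prop :=
  Submodule.span ℝ {v : Ed d | ∃ W, LieGen A W ∧ W p = v} = ⊤

/-- A controlled trajectory of `ẋ = V(x) + Σⱼ uⱼ(t) Xⱼ(x)` on `[0,T]` with piecewise
continuous controls `u`. -/
def IsCtrlTraj {d m : ℕ} (V : Ed d → Ed d) (X : Fin m → Ed d → Ed d) (T : ℝ)
    (u : Fin m → ℝ → ℝ) (x : ℝ → Ed d) : Prop :=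
  ContinuousOn x (Icc 0 T) ∧
  ∃ F : Finset ℝ,
    (∀ j, ContinuousOn (u j) (Icc 0 T \ F)) ∧
    ∀ t ∈ Icc 0 T, t ∉ F →
      HasDerivAt x (V (x t) + ∑ j, u j t • X j (x t)) t

/-- The attainable set `A_{ε,p}` on the torus. -/
def Attainable {d m : ℕ} (V : Ed d → Ed d) (X : Fin m → Ed d → Ed d) (ε : ℝ) (p : Ed d) :
    Set (Ed d) :=
  {q | ∃ θ > 0, ∃ u x, IsCtrlTraj V X θ u x ∧ (∀ j t, |u j t| ≤ ε) ∧
    x 0 = p ∧ ∃ k, x θ - q = twoPiVec d k}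

/-- The drift `V(x,y) = (0, (1 - cos x) sin y)` on `ℝ²`. -/
def Vex : Ed 2 → Ed 2 := fun p => WithLp.toLp 2 ![0, (1 - cos (p 0)) * sin (p 1)]

/-- The vector field `X₁(x,y) = (1, 0)` on `ℝ²`. -/
def X1ex : Ed 2 → Ed 2 := fun _ => WithLp.toLp 2 ![1, 0]

/-- The vector field `X₂(x,y) = (0, η(y))` on `ℝ²`. -/
def X2ex (η : ℝ → ℝ) : Ed 2 → Ed 2 := fun p => WithLp.toLp 2 ![0, η (p 1)]

def X1v : Ed 2 := WithLp.toLp 2 ![1, 0]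

def e1v : Ed 2 := WithLp.toLp 2 ![0, 1]

lemma smul_e1 (c : ℝ) : (WithLp.toLp 2 ![0, c] : Ed 2) = c • e1v := by
  ext i
  fin_cases i <;> simp [e1v, PiLp.smul_apply]

lemma proj_deriv (i : Fin 2) (p : Ed 2) :
    HasFDerivAt (fun q : Ed 2 => q i) (EuclideanSpace.proj i : Ed 2 →L[ℝ] ℝ) p := by
  simpa using (EuclideanSpace.proj i : Ed 2 →L[ℝ] ℝ).hasFDerivAt (x := p)

lemma hVex (p : Ed 2) :
    HasFDerivAt Vex
      (((((1 - cos (p 0)) • ((cos (p 1)) • (EuclideanSpace.proj (1:Fin 2) : Ed 2 →L[ℝ] ℝ)))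
        + (sin (p 1)) • ((0 : Ed 2 →L[ℝ] ℝ) - ((-sin (p 0)) • (EuclideanSpace.proj (0:Fin 2) : Ed 2 →L[ℝ] ℝ))))).smulRight e1v) p := by
  have h0 : HasFDerivAt (fun q : Ed 2 => cos (q 0))
      ((-sin (p 0)) • (EuclideanSpace.proj (0:Fin 2) : Ed 2 →L[ℝ] ℝ)) p :=
    (Real.hasDerivAt_cos (p 0)).comp_hasFDerivAt (f := fun q : Ed 2 => q 0) p (proj_deriv 0 p)
  have h1 : HasFDerivAt (fun q : Ed 2 => sin (q 1))
      ((cos (p 1)) • (EuclideanSpace.proj (1:Fin 2) : Ed 2 →L[ℝ] ℝ)) p :=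
    (Real.hasDerivAt_sin (p 1)).comp_hasFDerivAt (f := fun q : Ed 2 => q 1) p (proj_deriv 1 p)
  have h2 := ((hasFDerivAt_const (1:ℝ) p).sub h0).mul h1
  have h3 := h2.smul_const e1v
  have : Vex = fun q : Ed 2 => ((1 - cos (q 0)) * sin (q 1)) • e1v := by
    funext q; rw [Vex, ← smul_e1]
  rw [this]
  exact h3

lemma bracket1_eval (p : Ed 2) :
    fderiv ℝ Vex p (X1ex p) = (sin (p 0) * sin (p 1)) • e1v := by
  rw [(hVex p).fderiv, ContinuousLinearMap.smulRight_apply]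
  congr 1
  simp [X1ex]
  ring

lemma bracket1_fun : vfBracket X1ex Vex = fun p => (sin (p 0) * sin (p 1)) • e1v := by
  funext p
  rw [vfBracket, show fderiv ℝ X1ex p = 0 from fderiv_const_apply (WithLp.toLp 2 ![1, 0]), bracket1_eval]
  simp

lemma bracket2_eval (p : Ed 2) :
    vfBracket X1ex (vfBracket X1ex Vex) p = (cos (p 0) * sin (p 1)) • e1v := by
  have hW : HasFDerivAt (fun q : Ed 2 => (sin (q 0) * sin (q 1)) • e1v)
      ((((sin (p 0)) • ((cos (p 1)) • (EuclideanSpace.proj (1:Fin 2) : Ed 2 →L[ℝ] ℝ)))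
        + (sin (p 1)) • ((cos (p 0)) • (EuclideanSpace.proj (0:Fin 2) : Ed 2 →L[ℝ] ℝ))).smulRight e1v) p := by
    have h0 : HasFDerivAt (fun q : Ed 2 => sin (q 0))
        ((cos (p 0)) • (EuclideanSpace.proj (0:Fin 2) : Ed 2 →L[ℝ] ℝ)) p :=
      (Real.hasDerivAt_sin (p 0)).comp_hasFDerivAt (f := fun q : Ed 2 => q 0) p (proj_deriv 0 p)
    have h1 : HasFDerivAt (fun q : Ed 2 => sin (q 1))
        ((cos (p 1)) • (EuclideanSpace.proj (1:Fin 2) : Ed 2 →L[ℝ] ℝ)) p :=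
      (Real.hasDerivAt_sin (p 1)).comp_hasFDerivAt (f := fun q : Ed 2 => q 1) p (proj_deriv 1 p)
    exact (h0.mul h1).smul_const e1v
  rw [vfBracket, bracket1_fun,
    show fderiv ℝ X1ex p = 0 from fderiv_const_apply (WithLp.toLp 2 ![1, 0]), hW.fderiv]
  rw [ContinuousLinearMap.smulRight_apply]
  simp [X1ex]
  ring

lemma span_top_of (s : Set (Ed 2)) (c : ℝ) (hc : c ≠ 0)
    (h1 : X1v ∈ s) (h2 : c • e1v ∈ s) : Submodule.span ℝ s = ⊤ := by
  rw [Submodule.eq_top_iff']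
  intro v
  have hv : v = v 0 • X1v + (v 1 / c) • (c • e1v) := by
    ext i
    fin_cases i <;>
      simp [e1v, X1v, PiLp.smul_apply, PiLp.add_apply] <;> field_simp
  rw [hv]
  exact add_mem (Submodule.smul_mem _ _ (Submodule.subset_span h1))
    (Submodule.smul_mem _ _ (Submodule.subset_span h2))

lemma eta_pos_of_sin_zero (η : ℝ → ℝ) (hηper : ∀ y, η (y + 2 * π) = η y)
    (hηpos : ∀ y ∈ Ico 0 (π / 4) ∪ Ioo (3 * π / 4) (5 * π / 4) ∪ Ioc (7 * π / 4) (2 * π),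
      0 < η y) (y : ℝ) (hy : sin y = 0) : 0 < η y := by
  have hper : Function.Periodic η (2 * π) := hηper
  obtain ⟨n, hn⟩ := Real.sin_eq_zero_iff.mp hy
  rcases Int.even_or_odd n with ⟨q, hq⟩ | ⟨q, hq⟩
  · have hy0 : y = 0 + (q : ℤ) * (2 * π) := by rw [← hn, hq]; push_cast; ring
    rw [hy0, (hper.int_mul q) 0]
    exact hηpos 0 (Or.inl (Or.inl ⟨le_refl 0, by positivity⟩))
  · have hy0 : y = π + (q : ℤ) * (2 * π) := by rw [← hn, hq]; push_cast; ring
    rw [hy0, (hper.int_mul q) π]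
    refine hηpos π (Or.inl (Or.inr ⟨?_, ?_⟩)) <;> nlinarith [pi_pos]

/-- For `V(x,y) = (0,(1-cos x) sin y)`, `X₁ = (1,0)`, `X₂ = (0,η(y))` with
`η > 0` on `[0,π/4) ∪ (3π/4,5π/4) ∪ (7π/4,2π]`, the five vectors `V(p)`, `X₁(p)`, `X₂(p)`,
`[X₁,V](p)`, `[X₁,[X₁,V]](p)` span `ℝ²` at every `p`; in particular `{V, X₁, X₂}` satisfies
the Hörmander condition everywhere. -/
theorem hormander_of_example
    (η : ℝ → ℝ) (hη : ContDiff ℝ (⊤ : ℕ∞) η) (hηper : ∀ y, η (y + 2 * π) = η y)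
    (hηpos : ∀ y ∈ Ico 0 (π / 4) ∪ Ioo (3 * π / 4) (5 * π / 4) ∪ Ioc (7 * π / 4) (2 * π),
      0 < η y) :
    ∀ p : Ed 2,
      Submodule.span ℝ
        ({Vex p, X1ex p, X2ex η p, vfBracket X1ex Vex p,
          vfBracket X1ex (vfBracket X1ex Vex) p} : Set (Ed 2)) = ⊤ ∧
      Hormander {Vex, X1ex, X2ex η} p := by
  intro p
  set S : Set (Ed 2) := {Vex p, X1ex p, X2ex η p, vfBracket X1ex Vex p,
    vfBracket X1ex (vfBracket X1ex Vex) p} with hS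
  have hX1 : X1v ∈ S := Or.inr (Or.inl (by rfl))
  have hspan : Submodule.span ℝ S = ⊤ := by
    by_cases hs : sin (p 1) = 0
    · have hpos := eta_pos_of_sin_zero η hηper hηpos (p 1) hs
      apply span_top_of S (η (p 1)) (ne_of_gt hpos) hX1
      have hX2 : X2ex η p = η (p 1) • e1v := by rw [X2ex, ← smul_e1]
      rw [← hX2]
      exact Or.inr (Or.inr (Or.inl rfl))
    · by_cases hc : cos (p 0) = 0
      · have hsin0 : sin (p 0) ≠ 0 := by
          intro h
          have h2 := sin_sq_add_cos_sq (p 0)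
          rw [h, hc] at h2; norm_num at h2
        apply span_top_of S (sin (p 0) * sin (p 1)) (mul_ne_zero hsin0 hs) hX1
        rw [show (sin (p 0) * sin (p 1)) • e1v = vfBracket X1ex Vex p from
          (congrFun bracket1_fun p).symm]
        exact Or.inr (Or.inr (Or.inr (Or.inl rfl)))
      · apply span_top_of S (cos (p 0) * sin (p 1)) (mul_ne_zero hc hs) hX1
        rw [← bracket2_eval p]
        exact Or.inr (Or.inr (Or.inr (Or.inr rfl)))
  refine ⟨hspan, ?_⟩
  rw [Hormander, eq_top_iff, ← hspan]
  apply Submodule.span_mono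
  intro v hv
  have hV : LieGen {Vex, X1ex, X2ex η} Vex := LieGen.base _ (Or.inl rfl)
  have hX1g : LieGen {Vex, X1ex, X2ex η} X1ex := LieGen.base _ (Or.inr (Or.inl rfl))
  have hX2g : LieGen {Vex, X1ex, X2ex η} (X2ex η) := LieGen.base _ (Or.inr (Or.inr rfl))
  have hB1 := LieGen.bracket _ _ hX1g hV
  have hB2 := LieGen.bracket _ _ hX1g hB1
  rcases hv with h | h | h | h | h
  · exact ⟨Vex, hV, h.symm⟩
  · exact ⟨X1ex, hX1g, h.symm⟩
  · exact ⟨X2ex η, hX2g, h.symm⟩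
  · exact ⟨_, hB1, h.symm⟩
  · exact ⟨_, hB2, h.symm⟩
end
end

section
/- Let V(x,y) := (0, (1 − cos x) sin y) on ℝ², with flow φ_V. The set of nonwandering points of φ_V (for the induced flow on the 2-torus) is exactly S := {(x,y) ∈ ℝ² : x ∈ 2πℤ or y ∈ πℤ}; moreover every point of S is a stationary point of V (V vanishes exactly on S), and no point outside S is nonwandering. -/
open Real Set Filter Topology

noncomputable section

/-- The set `S = {(x,y) : x ∈ 2πℤ or y ∈ πℤ}`. -/
def Sset : Set (Ed 2) := {p | (∃ k : ℤ, p 0 = 2 * π * k) ∨ ∃ k : ℤ, p 1 = π * k}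

-- ### Auxiliary lemmas

lemma lipschitz_sin' : LipschitzWith 1 Real.sin := by
  apply lipschitzWith_of_nnnorm_deriv_le Real.differentiable_sin
  intro x
  rw [Real.deriv_sin, ← NNReal.coe_le_coe, coe_nnnorm, Real.norm_eq_abs, NNReal.coe_one]
  exact Real.abs_cos_le_one x

lemma lipschitz_cos' : LipschitzWith 1 Real.cos := by
  apply lipschitzWith_of_nnnorm_deriv_le Real.differentiable_cos
  intro x
  rw [Real.deriv_cos, ← NNReal.coe_le_coe, coe_nnnorm, Real.norm_eq_abs, NNReal.coe_one,
    abs_neg]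
  exact Real.abs_sin_le_one x

lemma lip_csin (c : ℝ) : LipschitzWith ‖c‖₊ (fun z => c * Real.sin z) := by
  apply lipschitzWith_of_nnnorm_deriv_le (Real.differentiable_sin.const_mul c)
  intro x
  have h : deriv (fun z => c * Real.sin z) x = c * Real.cos x :=
    ((Real.hasDerivAt_sin x).const_mul c).deriv
  rw [h, ← NNReal.coe_le_coe, coe_nnnorm, coe_nnnorm, Real.norm_eq_abs, Real.norm_eq_abs, abs_mul]
  nlinarith [Real.abs_cos_le_one x, abs_nonneg c]

lemma ode_unique {E : Type*} [NormedAddCommGroup E] [NormedSpace ℝ E] {v : E → E} {K : NNReal}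
    (hv : LipschitzWith K v) {f g : ℝ → E}
    (hf : ∀ t, HasDerivAt f (v (f t)) t) (hg : ∀ t, HasDerivAt g (v (g t)) t)
    {t₀ : ℝ} (h : f t₀ = g t₀) (t : ℝ) : f t = g t := by
  have := ODE_solution_unique_of_mem_Ioo (v := fun _ => v) (s := fun _ => (univ : Set E)) (K := K)
    (fun _ _ => (hv.lipschitzOnWith)) (t₀ := t₀) (a := min t₀ t - 1) (b := max t₀ t + 1)
    ⟨by linarith [min_le_left t₀ t], by linarith [le_max_left t₀ t]⟩
    (fun s _ => ⟨hf s, trivial⟩) (fun s _ => ⟨hg s, trivial⟩) h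
  exact this ⟨by linarith [min_le_right t₀ t], by linarith [le_max_right t₀ t]⟩

lemma sin_pos_Ioo {K : ℤ} {x : ℝ} (h1 : 2*π*K < x) (h2 : x < 2*π*K + π) : 0 < Real.sin x := by
  have he : Real.sin x = Real.sin (x - K*(2*π)) := by
    rw [← Real.sin_add_int_mul_two_pi (x - K*(2*π)) K]; ring_nf
  rw [he]
  apply Real.sin_pos_of_pos_of_lt_pi <;> push_cast <;> linarith

lemma sin_lo (K : ℤ) : Real.sin (2*π*K) = 0 := by
  have := Real.sin_int_mul_pi (2*K)
  push_cast at this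
  rw [show (2*π*(K:ℝ)) = (2*(K:ℝ)) * π by ring]
  exact this

lemma sin_hi (K : ℤ) : Real.sin (2*π*K + π) = 0 := by
  have := Real.sin_int_mul_pi (2*K+1)
  push_cast at this
  rw [show (2*π*(K:ℝ) + π) = ((2*(K:ℝ)+1) * π) by ring]
  exact this

lemma trap {c : ℝ} {K : ℤ} {y : ℝ → ℝ} (hy : ∀ t, HasDerivAt y (c * Real.sin (y t)) t)
    (h0 : y 0 ∈ Ioo (2*π*K) (2*π*K + π)) (t : ℝ) : y t ∈ Ioo (2*π*K) (2*π*K + π) := by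
  have hdiff : Differentiable ℝ y := fun s => (hy s).differentiableAt
  have hcont : Continuous y := hdiff.continuous
  have hne : ∀ (z : ℝ), Real.sin z = 0 → z ≠ y 0 → ∀ s, y s ≠ z := by
    intro z hz hz0 s hs
    apply hz0
    have hg : ∀ u, HasDerivAt (fun _ : ℝ => z) (c * Real.sin ((fun _ : ℝ => z) u)) u := by
      intro u
      simpa [hz] using (hasDerivAt_const u z)
    exact (ode_unique (lip_csin c) hy hg (t₀ := s) hs 0).symm ▸ rfl
  have hneU : ∀ s, y s ≠ 2*π*K + π := hne _ (sin_hi K) (ne_of_lt h0.2).symm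
  have hneL : ∀ s, y s ≠ 2*π*K := hne _ (sin_lo K) (ne_of_gt h0.1).symm
  constructor
  · by_contra hle
    push_neg at hle
    have : (2*π*K) ∈ uIcc (y 0) (y t) := by
      rw [mem_uIcc]; right
      exact ⟨hle, h0.1.le⟩
    obtain ⟨s, _, hs⟩ := intermediate_value_uIcc (hcont.continuousOn) this
    exact hneL s hs
  · by_contra hle
    push_neg at hle
    have : (2*π*K + π) ∈ uIcc (y 0) (y t) := by
      rw [mem_uIcc]; left
      exact ⟨h0.2.le, hle⟩
    obtain ⟨s, _, hs⟩ := intermediate_value_uIcc (hcont.continuousOn) this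
    exact hneU s hs

set_option maxHeartbeats 1000000 in
lemma escape {K : ℤ} {b : ℝ} (hb1 : 2*π*K < b) (hb2 : b < 2*π*K + π) {c₀ : ℝ} (hc₀ : 0 < c₀) :
    ∃ ε, 0 < ε ∧ ε ≤ π/2 ∧ ∀ c, c₀ ≤ c → ∀ y : ℝ → ℝ, (∀ t, HasDerivAt y (c * Real.sin (y t)) t) →
      ∀ k₁ : ℤ, |y 0 - (b + 2*π*k₁)| < ε → ∀ T, 1 ≤ T → ∀ j : ℤ, 2*ε ≤ |y T - (b + 2*π*j)| := by
  have hπ := Real.pi_pos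
  set r := min (b - 2*π*K) (2*π*K + π - b) / 2 with hr
  have hr1 : r ≤ (b - 2*π*K)/2 := by
    rw [hr]; gcongr; exact min_le_left _ _
  have hr2 : r ≤ (2*π*K + π - b)/2 := by
    rw [hr]; gcongr; exact min_le_right _ _
  have hr0 : 0 < r := by
    rw [hr]
    have : 0 < min (b - 2*π*K) (2*π*K + π - b) := lt_min (by linarith) (by linarith)
    linarith
  obtain ⟨y₀, hy₀mem, hy₀min⟩ := isCompact_Icc.exists_isMinOn (s := Icc (b-r) (b+r))
    (nonempty_Icc.mpr (by linarith)) Real.continuous_sin.continuousOn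
  set s₀ := Real.sin y₀ with hs₀def
  have hs₀ : 0 < s₀ := sin_pos_Ioo (K := K) (by linarith [hy₀mem.1]) (by linarith [hy₀mem.2])
  set ε := min (min (π/2) (r/2)) (c₀*s₀/4) with hε
  have hε0 : 0 < ε := lt_min (lt_min (by linarith) (by linarith)) (by positivity)
  have hεπ : ε ≤ π/2 := le_trans (min_le_left _ _) (min_le_left _ _)
  have hεr : ε ≤ r/2 := le_trans (min_le_left _ _) (min_le_right _ _)
  have hεc : ε ≤ c₀*s₀/4 := min_le_right _ _
  refine ⟨ε, hε0, hεπ, ?_⟩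
  intro c hc y hy k₁ h0 T hT
  have hc' : 0 < c := lt_of_lt_of_le hc₀ hc
  set b' := b + 2*π*k₁ with hb'
  rw [abs_lt] at h0
  have h0' : y 0 ∈ Ioo (2*π*((K+k₁ : ℤ) : ℝ)) (2*π*((K+k₁ : ℤ) : ℝ) + π) := by
    constructor <;> push_cast <;> nlinarith
  have htrap := trap (K := K + k₁) hy h0'
  have hdiff : Differentiable ℝ y := fun s => (hy s).differentiableAt
  have hmono : Monotone y := by
    apply monotone_of_deriv_nonneg hdiff
    intro s
    rw [(hy s).deriv]
    exact mul_nonneg hc'.le (sin_pos_Ioo (htrap s).1 (htrap s).2).le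
  have hgrow : min (b' + r) (y 0 + c*s₀*T) ≤ y T := by
    by_cases hcase : b' + r ≤ y T
    · exact le_trans (min_le_left _ _) hcase
    push_neg at hcase
    have hsub : ∀ t ∈ Icc (0:ℝ) T, s₀ ≤ Real.sin (y t) := by
      intro t ht
      have h1 : y 0 ≤ y t := hmono ht.1
      have h2 : y t ≤ y T := hmono ht.2
      have hmem : y t - k₁*(2*π) ∈ Icc (b - r) (b + r) := by
        constructor <;> push_cast <;> nlinarith
      have hminle := hy₀min hmem
      have hper : Real.sin (y t) = Real.sin (y t - k₁*(2*π)) := by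
        rw [← Real.sin_add_int_mul_two_pi (y t - k₁*(2*π)) k₁]; ring_nf
      rw [hper]
      exact hminle
    have hmo : MonotoneOn (fun t => y t - c*s₀*t) (Icc 0 T) := by
      apply monotoneOn_of_deriv_nonneg (convex_Icc 0 T)
      · exact (hdiff.continuous.sub (continuous_const.mul continuous_id)).continuousOn
      · exact (hdiff.sub ((differentiable_const _).mul differentiable_id)).differentiableOn
      · intro x hx
        rw [interior_Icc] at hx
        have hd : HasDerivAt (fun t => y t - c*s₀*t) (c*Real.sin (y x) - c*s₀*1) x :=
          (hy x).sub ((hasDerivAt_id x).const_mul (c*s₀))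
        rw [hd.deriv]
        have := hsub x (Ioo_subset_Icc_self hx)
        nlinarith
    have h01 : (0:ℝ) ∈ Icc (0:ℝ) T := ⟨le_rfl, by linarith⟩
    have hT1 : T ∈ Icc (0:ℝ) T := ⟨by linarith, le_rfl⟩
    have := hmo h01 hT1 (by linarith)
    simp only [mul_zero, sub_zero] at this
    exact le_trans (min_le_right _ _) (by linarith)
  have hyT_lb : b' + 2*ε ≤ y T := by
    have h1 : b' + 2*ε ≤ b' + r := by linarith
    have h2 : b' + 2*ε ≤ y 0 + c*s₀*T := by
      nlinarith [mul_le_mul hc (le_refl s₀) hs₀.le hc'.le,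
        mul_le_mul_of_nonneg_left hT (mul_nonneg hc'.le hs₀.le)]
    exact le_trans (le_min h1 h2) hgrow
  have hbK : 2*π*((K+k₁ : ℤ) : ℝ) < b' := by rw [hb']; push_cast; linarith
  have hyT_ub : y T < b' + 2*π - 2*ε := by
    have h2 := (htrap T).2
    linarith
  intro j
  have key : y T - (b + 2*π*j) = (y T - b') - 2*π*((j - k₁ : ℤ) : ℝ) := by
    rw [hb']; push_cast; ring
  have h2π : (0:ℝ) < 2*π := by linarith
  rcases le_or_gt (j - k₁) 0 with hle | hlt
  · have hnr : ((j - k₁ : ℤ):ℝ) ≤ 0 := by exact_mod_cast hle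
    have h3 : 2*π*((j - k₁ : ℤ):ℝ) ≤ 0 := mul_nonpos_of_nonneg_of_nonpos h2π.le hnr
    have : 2*ε ≤ y T - (b + 2*π*j) := by rw [key]; linarith
    exact le_trans this (le_abs_self _)
  · have hnr : (1:ℝ) ≤ ((j - k₁ : ℤ):ℝ) := by exact_mod_cast hlt
    have h3 : 2*π*1 ≤ 2*π*((j - k₁ : ℤ):ℝ) := mul_le_mul_of_nonneg_left hnr h2π.le
    have : 2*ε ≤ -(y T - (b + 2*π*j)) := by rw [key]; linarith
    exact le_trans this (neg_le_abs _)

lemma Ed2_abs_le_norm (v : Ed 2) (i : Fin 2) : |v i| ≤ ‖v‖ := by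
  rw [EuclideanSpace.norm_eq, show |v i| = Real.sqrt (‖v i‖^2) by
    rw [Real.sqrt_sq_eq_abs, Real.norm_eq_abs, abs_abs]]
  apply Real.sqrt_le_sqrt
  exact Finset.single_le_sum (f := fun j => ‖v j‖^2) (fun j _ => by positivity)
    (Finset.mem_univ i)

lemma Ed2_norm_snd (v : Ed 2) (h : v 0 = 0) : ‖v‖ = |v 1| := by
  rw [EuclideanSpace.norm_eq, Fin.sum_univ_two, h]
  simp [Real.norm_eq_abs, Real.sqrt_sq_eq_abs]

lemma distT_le (p q : Ed 2) (k : Fin 2 → ℤ) : distT p q ≤ ‖p - q - twoPiVec 2 k‖ := by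
  apply ciInf_le ⟨0, ?_⟩ k
  rintro x ⟨k', rfl⟩
  exact norm_nonneg _

lemma le_distT {p q : Ed 2} {c : ℝ} (h : ∀ k, c ≤ ‖p - q - twoPiVec 2 k‖) : c ≤ distT p q :=
  le_ciInf h

lemma distT_lt {p q : Ed 2} {ε : ℝ} (h : distT p q < ε) :
    ∃ k, ‖p - q - twoPiVec 2 k‖ < ε :=
  exists_lt_of_ciInf_lt h

lemma twoPiVec_zero : twoPiVec 2 (fun _ => 0) = 0 := by
  ext i
  simp [twoPiVec]

set_option maxHeartbeats 1000000 in
lemma lipVex : LipschitzWith 3 Vex := by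
  apply LipschitzWith.of_dist_le_mul
  intro p q
  rw [dist_eq_norm, dist_eq_norm]
  have h0 : (Vex p - Vex q) 0 = 0 := by simp [Vex, PiLp.sub_apply]
  have h1 : (Vex p - Vex q) 1 =
      (1 - Real.cos (p 0)) * Real.sin (p 1) - (1 - Real.cos (q 0)) * Real.sin (q 1) := by
    simp [Vex, PiLp.sub_apply]
  rw [Ed2_norm_snd _ h0, h1]
  have hid : (1 - Real.cos (p 0)) * Real.sin (p 1) - (1 - Real.cos (q 0)) * Real.sin (q 1)
      = (Real.cos (q 0) - Real.cos (p 0)) * Real.sin (p 1)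
        + (1 - Real.cos (q 0)) * (Real.sin (p 1) - Real.sin (q 1)) := by ring
  have hc : |Real.cos (q 0) - Real.cos (p 0)| ≤ |q 0 - p 0| := by
    have := lipschitz_cos'.dist_le_mul (q 0) (p 0)
    rwa [Real.dist_eq, Real.dist_eq, NNReal.coe_one, one_mul] at this
  have hs : |Real.sin (p 1) - Real.sin (q 1)| ≤ |p 1 - q 1| := by
    have := lipschitz_sin'.dist_le_mul (p 1) (q 1)
    rwa [Real.dist_eq, Real.dist_eq, NNReal.coe_one, one_mul] at this
  have hsb : |Real.sin (p 1)| ≤ 1 := Real.abs_sin_le_one _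
  have hcb : |1 - Real.cos (q 0)| ≤ 2 := by
    rw [abs_le]
    constructor <;> nlinarith [Real.cos_le_one (q 0), Real.neg_one_le_cos (q 0)]
  have hn0 : |q 0 - p 0| ≤ ‖p - q‖ := by
    have := Ed2_abs_le_norm (p - q) 0
    rw [PiLp.sub_apply] at this
    rwa [abs_sub_comm]
  have hn1 : |p 1 - q 1| ≤ ‖p - q‖ := by
    have := Ed2_abs_le_norm (p - q) 1
    rwa [PiLp.sub_apply] at this
  have hnn : (0:ℝ) ≤ ‖p - q‖ := norm_nonneg _
  calc |(1 - Real.cos (p 0)) * Real.sin (p 1) - (1 - Real.cos (q 0)) * Real.sin (q 1)|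
      ≤ |Real.cos (q 0) - Real.cos (p 0)| * |Real.sin (p 1)|
        + |1 - Real.cos (q 0)| * |Real.sin (p 1) - Real.sin (q 1)| := by
        rw [hid]
        refine le_trans (abs_add_le _ _) ?_
        rw [abs_mul, abs_mul]
    _ ≤ ‖p - q‖ * 1 + 2 * ‖p - q‖ := by
        have e1 : |Real.cos (q 0) - Real.cos (p 0)| * |Real.sin (p 1)| ≤ ‖p - q‖ * 1 := by
          apply mul_le_mul (le_trans hc hn0) hsb (abs_nonneg _) hnn
        have e2 : |1 - Real.cos (q 0)| * |Real.sin (p 1) - Real.sin (q 1)| ≤ 2 * ‖p - q‖ := by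
          apply mul_le_mul hcb (le_trans hs hn1) (abs_nonneg _) (by norm_num)
        linarith
    _ ≤ (3 : NNReal) * ‖p - q‖ := by
        push_cast
        linarith

lemma comp_deriv {f : ℝ → Ed 2} {v : Ed 2} {t : ℝ} (hf : HasDerivAt f v t) (i : Fin 2) :
    HasDerivAt (fun s => f s i) (v i) t := by
  have := (EuclideanSpace.proj (𝕜 := ℝ) i).hasFDerivAt.comp_hasDerivAt t hf
  exact this

lemma Vex_apply1 (q : Ed 2) : Vex q 1 = (1 - Real.cos (q 0)) * Real.sin (q 1) := by
  simp [Vex]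

lemma Vex_apply0 (q : Ed 2) : Vex q 0 = 0 := by
  simp [Vex]

set_option maxHeartbeats 1000000 in
/-- For `V(x,y) = (0, (1-cos x) sin y)`, the vector field vanishes exactly
on `S`, and the nonwandering points of its flow on the 2-torus are exactly the points of `S`. -/
theorem nonwandering_set_of_example
    (φ : ℝ → Ed 2 → Ed 2) (hφ : IsFlowOf Vex φ) :
    (∀ p : Ed 2, Vex p = 0 ↔ p ∈ Sset) ∧
    ∀ p : Ed 2, NonwanderingPt φ p ↔ p ∈ Sset := by
  --

  have hπ := Real.pi_pos
  have part1 : ∀ p : Ed 2, Vex p = 0 ↔ p ∈ Sset := by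
    intro p
    constructor
    · intro h
      have h1 : (1 - Real.cos (p 0)) * Real.sin (p 1) = 0 := by
        rw [← Vex_apply1 p, h]
        rfl
      rcases mul_eq_zero.mp h1 with h2 | h2
      · left
        obtain ⟨n, hn⟩ := (Real.cos_eq_one_iff _).mp (by linarith)
        exact ⟨n, by rw [← hn]; ring⟩
      · right
        obtain ⟨n, hn⟩ := Real.sin_eq_zero_iff.mp h2
        exact ⟨n, by rw [← hn]; ring⟩
    · intro h
      have h1 : (1 - Real.cos (p 0)) * Real.sin (p 1) = 0 := by
        rcases h with ⟨k, hk⟩ | ⟨k, hk⟩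
        · have : Real.cos (p 0) = 1 := (Real.cos_eq_one_iff _).mpr ⟨k, by rw [hk]; ring⟩
          rw [this]; ring
        · have : Real.sin (p 1) = 0 := Real.sin_eq_zero_iff.mpr ⟨k, by rw [hk]; ring⟩
          rw [this]; ring
      ext i
      fin_cases i <;> simp [Vex, h1]
  refine ⟨part1, fun p => ⟨?_, ?_⟩⟩
  · -- NonwanderingPt → p ∈ Sset
    intro hnw
    by_contra hp
    rw [Sset, mem_setOf_eq] at hp
    push_neg at hp
    obtain ⟨ha, hb⟩ := hp
    have hcos : Real.cos (p 0) < 1 := by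
      rcases lt_or_eq_of_le (Real.cos_le_one (p 0)) with h | h
      · exact h
      · obtain ⟨n, hn⟩ := (Real.cos_eq_one_iff _).mp h
        exact absurd (by rw [← hn]; ring) (ha n)
    set a := p 0 with hadef
    set b := p 1 with hbdef
    set c₀ := (1 - Real.cos a)/2 with hc₀def
    have hc₀ : 0 < c₀ := by rw [hc₀def]; linarith
    set n := ⌊b / π⌋ with hn
    have hb1 : (n:ℝ)*π < b := by
      rcases lt_or_eq_of_le ((le_div_iff₀ hπ).mp (Int.floor_le (b / π))) with h | h
      · linarith [h]
      · exact absurd (by rw [← h]; ring) (hb n)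
    have hb2 : b < ((n:ℝ)+1)*π := by
      have := Int.lt_floor_add_one (b / π)
      calc b = (b / π) * π := by field_simp
        _ < ((n:ℝ)+1)*π := by
            apply mul_lt_mul_of_pos_right _ hπ
            exact_mod_cast this
    -- produce the escape data for b (handling both parities of n)
    have key : ∃ ε₀, 0 < ε₀ ∧ ∀ c, c₀ ≤ c → ∀ y : ℝ → ℝ,
        (∀ t, HasDerivAt y (c * Real.sin (y t)) t) →
        ∀ k₁ : ℤ, |y 0 - (b + 2*π*k₁)| < ε₀ → ∀ T, 1 ≤ T →
        ∀ j : ℤ, 2*ε₀ ≤ |y T - (b + 2*π*j)| := by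
      rcases Int.even_or_odd n with ⟨K, hK⟩ | ⟨K, hK⟩
      · have hKr : (n:ℝ) = 2*K := by rw [hK]; push_cast; ring
        have h1 : 2*π*K < b := by nlinarith
        have h2 : b < 2*π*K + π := by nlinarith
        obtain ⟨ε₀, hε₀, _, hmain⟩ := escape h1 h2 hc₀
        exact ⟨ε₀, hε₀, hmain⟩
      · have hKr : (n:ℝ) = 2*K + 1 := by rw [hK]; push_cast; ring
        have h1 : 2*π*(((-(K+1)) : ℤ):ℝ) < -b := by push_cast; nlinarith
        have h2 : -b < 2*π*(((-(K+1)) : ℤ):ℝ) + π := by push_cast; nlinarith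
        obtain ⟨ε₀, hε₀, _, hmain⟩ := escape h1 h2 hc₀
        refine ⟨ε₀, hε₀, ?_⟩
        intro c hc y hy k₁ h0 T hT j
        have hz : ∀ t, HasDerivAt (fun s => -(y s)) (c * Real.sin (-(y t))) t := by
          intro t
          have := (hy t).neg
          rwa [show -(c * Real.sin (y t)) = c * Real.sin (-(y t)) by
            rw [Real.sin_neg]; ring] at this
        have h0' : |(fun s => -(y s)) 0 - (-b + 2*π*((-k₁ : ℤ):ℝ))| < ε₀ := by
          rw [show (fun s => -(y s)) 0 - (-b + 2*π*((-k₁ : ℤ):ℝ))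
            = -(y 0 - (b + 2*π*k₁)) by push_cast; ring, abs_neg]
          exact h0
        have := hmain c hc _ hz (-k₁) h0' T hT (-j)
        rwa [show (fun s => -(y s)) T - (-b + 2*π*((-j : ℤ):ℝ))
          = -(y T - (b + 2*π*j)) by push_cast; ring, abs_neg] at this
    obtain ⟨ε₀, hε₀, hmain⟩ := key
    set ε := min ε₀ c₀ with hε
    have hε0 : 0 < ε := lt_min hε₀ hc₀
    obtain ⟨T, hT, p', hd1, hd2⟩ := hnw ε hε0
    obtain ⟨k, hk⟩ := distT_lt hd1
    have hk0 : |p' 0 - a - 2*π*(k 0)| < ε := by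
      have h1 := Ed2_abs_le_norm (p' - p - twoPiVec 2 k) 0
      have h2 : (p' - p - twoPiVec 2 k) 0 = p' 0 - a - 2*π*(k 0) := by
        rw [PiLp.sub_apply, PiLp.sub_apply]; rfl
      rw [h2] at h1
      linarith
    have hk1 : |p' 1 - b - 2*π*(k 1)| < ε := by
      have h1 := Ed2_abs_le_norm (p' - p - twoPiVec 2 k) 1
      have h2 : (p' - p - twoPiVec 2 k) 1 = p' 1 - b - 2*π*(k 1) := by
        rw [PiLp.sub_apply, PiLp.sub_apply]; rfl
      rw [h2] at h1
      linarith
    have hder : ∀ t, HasDerivAt (fun s => φ s p') (Vex (φ t p')) t := fun t => hφ.2 t p'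
    have hx : ∀ t, (φ t p') 0 = p' 0 := by
      have hconst := is_const_of_deriv_eq_zero (f := fun t => (φ t p') 0)
        (fun t => (comp_deriv (hder t) 0).differentiableAt)
        (fun t => by rw [(comp_deriv (hder t) 0).deriv]; exact Vex_apply0 _)
      intro t
      exact (hconst t 0).trans (by show (φ 0 p') 0 = p' 0; rw [hφ.1 p'])
    set c := 1 - Real.cos (p' 0) with hcdef
    have hcc : c₀ ≤ c := by
      have hper : Real.cos (p' 0) = Real.cos (p' 0 - (k 0)*(2*π)) := by
        rw [← Real.cos_add_int_mul_two_pi (p' 0 - (k 0)*(2*π)) (k 0)]; ring_nf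
      have hlip := lipschitz_cos'.dist_le_mul (p' 0 - (k 0)*(2*π)) a
      rw [Real.dist_eq, Real.dist_eq, NNReal.coe_one, one_mul] at hlip
      have h1 : |p' 0 - (k 0)*(2*π) - a| < ε := by
        rw [show p' 0 - (k 0)*(2*π) - a = p' 0 - a - 2*π*(k 0) by push_cast; ring]
        exact hk0
      have h2 : |Real.cos (p' 0) - Real.cos a| < ε := by
        rw [hper]
        exact lt_of_le_of_lt hlip h1
      rw [abs_lt] at h2
      have hεc₀ : ε ≤ c₀ := min_le_right _ _
      rw [hcdef, hc₀def]
      rw [hc₀def] at hεc₀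
      linarith
    have hy : ∀ t, HasDerivAt (fun s => (φ s p') 1) (c * Real.sin ((φ t p') 1)) t := by
      intro t
      have h1 := comp_deriv (hder t) 1
      rwa [Vex_apply1 (φ t p'), hx t, ← hcdef] at h1
    have h0 : |(fun s => (φ s p') 1) 0 - (b + 2*π*(k 1))| < ε₀ := by
      simp only
      rw [hφ.1 p']
      refine lt_of_lt_of_le ?_ (min_le_left ε₀ c₀)
      rw [show p' 1 - (b + 2*π*(k 1)) = p' 1 - b - 2*π*(k 1) by ring]
      exact hk1
    have hfin := hmain c hcc _ hy (k 1) h0 T hT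
    have hge : ε ≤ distT (φ T p') p := by
      apply le_distT
      intro j
      have h1 := Ed2_abs_le_norm (φ T p' - p - twoPiVec 2 j) 1
      have h2 : (φ T p' - p - twoPiVec 2 j) 1 = (φ T p') 1 - (b + 2*π*(j 1)) := by
        rw [PiLp.sub_apply, PiLp.sub_apply]
        show (φ T p') 1 - b - 2*π*(j 1) = _
        ring
      rw [h2] at h1
      have h3 := hfin (j 1)
      have h4 : ε ≤ 2*ε₀ := le_trans (min_le_left _ _) (by linarith)
      linarith
    linarith
  · -- p ∈ Sset → NonwanderingPt
    intro hp ε hε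
    have hV0 : Vex p = 0 := (part1 p).mpr hp
    have hfix : ∀ t, φ t p = p := by
      intro t
      have hg : ∀ u, HasDerivAt (fun _ : ℝ => p) (Vex ((fun _ : ℝ => p) u)) u := by
        intro u
        simpa [hV0] using (hasDerivAt_const u p)
      exact ode_unique lipVex (fun u => hφ.2 u p) hg (t₀ := 0) (hφ.1 p) t
    have hdpp : distT p p ≤ 0 := by
      have := distT_le p p (fun _ => 0)
      rwa [twoPiVec_zero, sub_zero, sub_self, norm_zero] at this
    exact ⟨1, le_refl 1, p, lt_of_le_of_lt hdpp hε, by rw [hfix 1]; exact lt_of_le_of_lt hdpp hε⟩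
end
end
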